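/- arXiv:2403.09697 — 2 statements merged into one kernel-verified Lean document; each statement's English description precedes it below -/
import Mathlib

section
/- The sequence of partial products N ↦ ∏_{k=0}^{N-1} (1/2) · tan(π·2^{-k-1}/3) · cot(π·2^{-k-2}/3) converges, as N → ∞, to 2·√3/π. -/
/-!
Writing `cot = tan⁻¹`, the `k`-th factor `(1/2) tan (x/2^k) cot (x/2^(k+1))` equals `g (k+1) / g k`
for `g k = (2^k tan (x/2^k))⁻¹`, so the partial product telescopes to `tan x / (2^N tan (x/2^N))`.
Since `tan t ~ t` at `0`, `2^N tan (x/2^N) → x`, and the product tends to `tan x / x`;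
at `x = π/6` this is `(1/√3) / (π/6) = 2√3/π`.
-/

open Real Finset Filter Topology

theorem prod_range_half_tan_mul_cot {x : ℝ} (hx : ∀ k : ℕ, tan (x / 2 ^ k) ≠ 0) (N : ℕ) :
    ∏ k ∈ range N, (1 / 2 : ℝ) * tan (x / 2 ^ k) * cot (x / 2 ^ (k + 1)) =
      tan x / (2 ^ N * tan (x / 2 ^ N)) := by
  induction N with
  | zero => simp [div_self (by simpa using hx 0 : tan x ≠ 0)]
  | succ n ih =>
    rw [prod_range_succ, ih, ← tan_inv_eq_cot]
    have := hx n
    have := hx (n + 1)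
    field_simp
    ring

theorem tendsto_two_pow_mul_tan_div_two_pow (x : ℝ) :
    Tendsto (fun N : ℕ => 2 ^ N * tan (x / 2 ^ N)) atTop (𝓝 x) := by
  rcases eq_or_ne x 0 with rfl | hx
  · simp
  have h_slope : Tendsto (fun t => t⁻¹ * tan t) (𝓝[≠] 0) (𝓝 1) := by
    simpa using (hasDerivAt_tan (x := 0) (by simp)).tendsto_slope_zero
  have h_arg : Tendsto (fun N : ℕ => x / 2 ^ N) atTop (𝓝[≠] 0) := by
    refine tendsto_nhdsWithin_of_tendsto_nhds_of_eventually_within _ ?_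
      (Eventually.of_forall fun N => div_ne_zero hx (by positivity))
    exact tendsto_const_nhds.div_atTop (tendsto_pow_atTop_atTop_of_one_lt one_lt_two)
  have := (h_slope.comp h_arg).const_mul x
  rw [mul_one] at this
  refine this.congr fun N => ?_
  simp only [Function.comp_apply]
  field_simp

theorem tendsto_prod_half_tan_mul_cot {x : ℝ} (hx : ∀ k : ℕ, tan (x / 2 ^ k) ≠ 0) :
    Tendsto (fun N => ∏ k ∈ range N, (1 / 2 : ℝ) * tan (x / 2 ^ k) * cot (x / 2 ^ (k + 1)))
      atTop (𝓝 (tan x / x)) := by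
  have hx0 : x ≠ 0 := by
    rintro rfl
    simpa using hx 0
  simp_rw [prod_range_half_tan_mul_cot hx]
  exact tendsto_const_nhds.div (tendsto_two_pow_mul_tan_div_two_pow x) hx0

theorem tan_product_two_sqrt_three_div_pi :
    Filter.Tendsto
      (fun N : ℕ => ∏ k ∈ Finset.range N,
        (1 / 2 : ℝ) * Real.tan (Real.pi * (2 : ℝ) ^ (-(k : ℤ) - 1) / 3) *
          Real.cot (Real.pi * (2 : ℝ) ^ (-(k : ℤ) - 2) / 3))
      Filter.atTop (𝓝 (2 * Real.sqrt 3 / Real.pi)) := by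
  have h_arg : ∀ n : ℕ, π * (2 : ℝ) ^ (-(n : ℤ) - 1) / 3 = π / 6 / 2 ^ n := fun n => by
    rw [zpow_sub₀ two_ne_zero, zpow_neg, zpow_natCast]
    field_simp
    ring
  have h_arg' : ∀ k : ℕ, π * (2 : ℝ) ^ (-(k : ℤ) - 2) / 3 = π / 6 / 2 ^ (k + 1) := fun k => by
    rw [← h_arg]
    push_cast
    ring_nf
  have h_tan : ∀ k : ℕ, tan (π / 6 / 2 ^ k) ≠ 0 := fun k => by
    refine (tan_pos_of_pos_of_lt_pi_div_two (by positivity) ?_).ne'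
    calc π / 6 / 2 ^ k ≤ π / 6 := div_le_self (by positivity) (one_le_pow₀ one_le_two)
      _ < π / 2 := by linarith [pi_pos]
  have h_lim : tan (π / 6) / (π / 6) = 2 * √3 / π := by
    rw [tan_pi_div_six]
    field_simp
    rw [sq_sqrt (by norm_num)]
    norm_num
  simp_rw [h_arg, h_arg', ← h_lim]
  exact tendsto_prod_half_tan_mul_cot h_tan
end

section
/- The sequence of partial products N ↦ ∏_{k=0}^{N-1} cos(π·2^{-k-2}) converges, as N → ∞, to 2/π. -/
/-!
The double-angle formula `sin (2y) = 2 sin y cos y` reads `sinc (2y) = sinc y * cos y`, so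
`sinc x = sinc (x / 2 ^ n) * ∏ k < n, cos (x / 2 ^ (k + 1))`. As `n → ∞` the first factor
tends to `sinc 0 = 1` by continuity, so the partial products tend to `sinc x`, which is `2 / π`
at `x = π / 2`.
-/

open Real Finset Filter Topology

namespace Real

theorem sinc_two_mul (y : ℝ) : sinc (2 * y) = sinc y * cos y := by
  rcases eq_or_ne y 0 with rfl | hy
  · simp
  · rw [sinc_of_ne_zero hy, sinc_of_ne_zero (mul_ne_zero two_ne_zero hy), sin_two_mul]
    field_simp

theorem sinc_eq_sinc_div_two_pow_mul_prod_cos (x : ℝ) (n : ℕ) :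
    sinc x = sinc (x / 2 ^ n) * ∏ k ∈ range n, cos (x / 2 ^ (k + 1)) := by
  induction n with
  | zero => simp
  | succ n ih =>
    have halve : x / 2 ^ n = 2 * (x / 2 ^ (n + 1)) := by rw [pow_succ]; field_simp
    rw [ih, halve, sinc_two_mul, prod_range_succ]
    ring

theorem tendsto_prod_cos_div_two_pow (x : ℝ) :
    Tendsto (fun n : ℕ => ∏ k ∈ range n, cos (x / 2 ^ (k + 1))) atTop (𝓝 (sinc x)) := by
  have hsmall : Tendsto (fun n : ℕ => sinc (x / 2 ^ n)) atTop (𝓝 1) := by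
    have hdiv : Tendsto (fun n : ℕ => x / 2 ^ n) atTop (𝓝 0) :=
      tendsto_const_nhds.div_atTop (tendsto_pow_atTop_atTop_of_one_lt one_lt_two)
    rw [← sinc_zero]
    exact (continuous_sinc.tendsto 0).comp hdiv
  have hquot := (tendsto_const_nhds (x := sinc x)).div hsmall one_ne_zero
  rw [div_one] at hquot
  refine hquot.congr' ((hsmall.eventually_ne one_ne_zero).mono fun n hn => ?_)
  rw [Pi.div_apply, sinc_eq_sinc_div_two_pow_mul_prod_cos x n, mul_div_cancel_left₀ _ hn]

end Real

theorem viete_formula :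
    Filter.Tendsto
      (fun N : ℕ => ∏ k ∈ Finset.range N, Real.cos (Real.pi * (2 : ℝ) ^ (-(k : ℤ) - 2)))
      Filter.atTop (𝓝 (2 / Real.pi)) := by
  have hangle (k : ℕ) : π * (2 : ℝ) ^ (-(k : ℤ) - 2) = π / 2 / 2 ^ (k + 1) := by
    rw [show -(k : ℤ) - 2 = -((k + 1 : ℕ) + 1 : ℤ) by push_cast; ring, zpow_neg,
      zpow_add₀ two_ne_zero, zpow_natCast, zpow_one]
    field_simp
  have hsinc : sinc (π / 2) = 2 / π := by
    rw [sinc_of_ne_zero (by positivity), sin_pi_div_two, one_div_div]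
  simpa only [hangle, hsinc] using tendsto_prod_cos_div_two_pow (π / 2)
end
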